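/- arXiv:2004.12942 — 2 statements merged into one kernel-verified Lean document; each statement's English description precedes it below -/
import Mathlib

section
/- For every k ≥ 2 and every n with 2^{k−1} − 1 < n < 2^k − 1, there exists a Boolean function f on n variables, all of whose variables are influencing, such that f is computed by a decision tree of depth k and there exist k distinct indices i_1, …, i_k, Booleans d_1, …, d_k, and an assignment of constants to the remaining n − k variables such that the corresponding restriction of f equals z ↦ ⋀_{t=1}^{k} (z_{i_t} XOR d_t); that is, f restricts to a function isomorphic to the k-variable AND. -/
/-!
The tree queries a spine of `k` variables `v₁, …, v_k`: the true-edge of `v_t` leads to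
`v_{t+1}` (and that of `v_k` to the leaf `true`), the false-edge of `v_t` to an alternating tree
of depth `k - t` on its own block of at most `2^(k-t) - 1` variables; an alternating tree flips
its output along every true-edge and answers `false` on the all-false input. These blocks can
absorb all `n - k ≤ 2^k - 1 - k` remaining variables, so the tree has depth `k` and queries every
variable exactly once. Setting all block variables to `false` leaves the AND of the spine.

Every queried variable is influencing because at every node the two subtrees avoid the node's
variable and compute different functions: toggling that variable on an input separating them
changes the value, and any influencing variable of a subtree stays influencing once the node's
variable is pinned to the side of that subtree.
-/

/-- A deterministic decision tree over `n` Boolean variables: either a leaf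
labelled by a `Bool`, or an internal node querying a variable with two subtrees. -/
inductive DTree (n : ℕ) where
  | leaf : Bool → DTree n
  | node : Fin n → DTree n → DTree n → DTree n

namespace DTree

/-- Evaluation of a decision tree on an input. -/
def eval {n : ℕ} : DTree n → (Fin n → Bool) → Bool
  | leaf b, _ => b
  | node i t0 t1, x => if x i then eval t1 x else eval t0 x

/-- The depth of a decision tree: the maximum number of internal nodes on a
root-to-leaf path. -/
def depth {n : ℕ} : DTree n → ℕ
  | leaf _ => 0
  | node _ t0 t1 => max (depth t0) (depth t1) + 1

/-- A decision tree computes `f` if its evaluation agrees with `f` on all inputs. -/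
def Computes {n : ℕ} (T : DTree n) (f : (Fin n → Bool) → Bool) : Prop :=
  ∀ x, T.eval x = f x

end DTree

/-- Variable `i` is influencing for `f`: there are inputs differing only in
coordinate `i` on which `f` takes different values. -/
def Influences {n : ℕ} (f : (Fin n → Bool) → Bool) (i : Fin n) : Prop :=
  ∃ x x' : Fin n → Bool, (∀ j, j ≠ i → x j = x' j) ∧ f x ≠ f x'

open Function

theorem Influences.of_update {n : ℕ} {f g : (Fin n → Bool) → Bool} {i j : Fin n} {b : Bool}
    (hfg : ∀ x, f (update x i b) = g x) (h : Influences g j) : Influences f j := by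
  obtain ⟨x, x', hxx', hne⟩ := h
  refine ⟨update x i b, update x' i b, fun v hv => ?_, by rwa [hfg, hfg]⟩
  by_cases hvi : v = i
  · simp [hvi]
  · simp [update_of_ne hvi, hxx' v hv]

section

variable {α : Type*}

theorem length_take_drop_lt {r : ℕ} {l : List α} (h : l.length + 1 < 2 ^ (r + 1)) :
    (l.take (2 ^ r - 1)).length < 2 ^ r ∧ (l.drop (2 ^ r - 1)).length < 2 ^ r := by
  have := Nat.one_le_two_pow (n := r)
  rw [pow_succ] at h
  simp only [List.length_take, List.length_drop]
  omega

-- the largest block an alternating tree of depth `r` can hold that still leaves `r` variables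
-- for the rest of the spine
def blockSize (r m : ℕ) : ℕ := min (2 ^ r - 1) (m - r)

theorem length_take_blockSize_lt (r : ℕ) (l : List α) :
    (l.take (blockSize r l.length)).length < 2 ^ r := by
  have := Nat.one_le_two_pow (n := r)
  simp only [List.length_take, blockSize]
  omega

theorem length_drop_blockSize_lt {r : ℕ} {l : List α} (h : l.length + 1 < 2 ^ (r + 1)) :
    (l.drop (blockSize r l.length)).length < 2 ^ r := by
  have := Nat.lt_two_pow_self (n := r)
  rw [pow_succ] at h
  simp only [List.length_drop, blockSize]
  omega

theorem le_length_drop_blockSize {r : ℕ} {l : List α} (h : r ≤ l.length) :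
    r ≤ (l.drop (blockSize r l.length)).length := by
  simp only [List.length_drop, blockSize]
  omega

def spine : ℕ → List α → List α
  | 0, _ => []
  | _ + 1, [] => []
  | r + 1, v :: l => v :: spine r (l.drop (blockSize r l.length))

theorem spine_sublist (r : ℕ) (l : List α) : (spine r l).Sublist l := by
  induction r generalizing l with
  | zero => simp [spine]
  | succ r ih =>
    cases l with
    | nil => simp [spine]
    | cons v l => exact ((ih _).trans (List.drop_sublist _ _)).cons_cons v

theorem length_spine {r : ℕ} {l : List α} (h : r ≤ l.length) : (spine r l).length = r := by
  induction r generalizing l with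
  | zero => rfl
  | succ r ih =>
    cases l with
    | nil => simp at h
    | cons v l =>
      simp only [spine, List.length_cons]
      rw [ih (le_length_drop_blockSize (Nat.le_of_succ_le_succ h))]

end

namespace DTree

variable {n : ℕ}

def vars : DTree n → Finset (Fin n)
  | leaf _ => ∅
  | node i t0 t1 => insert i (t0.vars ∪ t1.vars)

theorem eval_congr {T : DTree n} {x y : Fin n → Bool} (h : ∀ i ∈ T.vars, x i = y i) :
    T.eval x = T.eval y := by
  induction T with
  | leaf b => rfl
  | node i t0 t1 ih0 ih1 =>
    simp only [vars, Finset.mem_insert, Finset.mem_union] at h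
    simp only [eval, h i (Or.inl rfl), ih0 fun j hj => h j (Or.inr (Or.inl hj)),
      ih1 fun j hj => h j (Or.inr (Or.inr hj))]

theorem eval_update_of_notMem {T : DTree n} {i : Fin n} (hi : i ∉ T.vars)
    (x : Fin n → Bool) (b : Bool) : T.eval (update x i b) = T.eval x :=
  eval_congr fun _ hj => update_of_ne (ne_of_mem_of_not_mem hj hi) _ _

theorem exists_eval_ne_of_disjoint {t0 t1 : DTree n} (hd : Disjoint t0.vars t1.vars)
    {x0 x1 : Fin n → Bool} (hne : t0.eval x0 ≠ t1.eval x1) :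
    ∃ x, t0.eval x ≠ t1.eval x := by
  classical
  refine ⟨fun v => if v ∈ t1.vars then x1 v else x0 v, ?_⟩
  rwa [eval_congr (y := x0) fun v hv => if_neg (Finset.disjoint_left.mp hd hv),
    eval_congr (y := x1) fun v hv => if_pos hv]

def Essential (T : DTree n) : Prop :=
  ∀ i ∈ T.vars, Influences T.eval i

theorem Essential.node {i : Fin n} {t0 t1 : DTree n} (h0 : t0.Essential) (h1 : t1.Essential)
    (hi0 : i ∉ t0.vars) (hi1 : i ∉ t1.vars) (hne : ∃ x, t0.eval x ≠ t1.eval x) :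
    (node i t0 t1).Essential := by
  intro j hj
  simp only [vars, Finset.mem_insert, Finset.mem_union] at hj
  rcases hj with rfl | hj | hj
  · obtain ⟨x, hx⟩ := hne
    refine ⟨update x j false, update x j true, fun v hv => by simp [update_of_ne hv], ?_⟩
    simpa [eval, eval_update_of_notMem hi0, eval_update_of_notMem hi1] using hx
  · exact (h0 j hj).of_update (i := i) (b := false) fun x => by
      simp [eval, eval_update_of_notMem hi0]
  · exact (h1 j hj).of_update (i := i) (b := true) fun x => by
      simp [eval, eval_update_of_notMem hi1]

theorem notMem_of_nodup_cons {v : Fin n} {l l' : List (Fin n)} (hnd : (v :: l).Nodup)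
    (hl' : l'.Sublist l) {T : DTree n} (hT : T.vars = l'.toFinset) : v ∉ T.vars := by
  rw [hT, List.mem_toFinset]
  exact fun h => (List.nodup_cons.mp hnd).1 (hl'.subset h)

def alternating : ℕ → Bool → List (Fin n) → DTree n
  | 0, b, _ => leaf b
  | _ + 1, b, [] => leaf b
  | r + 1, b, v :: l =>
    node v (alternating r b (l.take (2 ^ r - 1))) (alternating r (!b) (l.drop (2 ^ r - 1)))

theorem depth_alternating_le (r : ℕ) (b : Bool) (l : List (Fin n)) :
    (alternating r b l).depth ≤ r := by
  induction r generalizing b l with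
  | zero => simp [alternating, depth]
  | succ r ih =>
    cases l with
    | nil => simp [alternating, depth]
    | cons v l => simpa [alternating, depth] using ⟨ih b _, ih (!b) _⟩

theorem eval_alternating_const_false (r : ℕ) (b : Bool) (l : List (Fin n)) :
    (alternating r b l).eval (fun _ => false) = b := by
  induction r generalizing b l with
  | zero => rfl
  | succ r ih =>
    cases l with
    | nil => rfl
    | cons v l => simp [alternating, eval, ih]

theorem vars_alternating {r : ℕ} {b : Bool} {l : List (Fin n)} (hl : l.length < 2 ^ r) :
    (alternating r b l).vars = l.toFinset := by
  induction r generalizing b l with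
  | zero => simp_all [alternating, vars]
  | succ r ih =>
    cases l with
    | nil => rfl
    | cons v l =>
      obtain ⟨htake, hdrop⟩ := length_take_drop_lt hl
      simp only [alternating, vars, List.toFinset_cons]
      rw [ih htake, ih hdrop, ← List.toFinset_append, List.take_append_drop]

theorem essential_alternating {r : ℕ} {b : Bool} {l : List (Fin n)} (hnd : l.Nodup)
    (hl : l.length < 2 ^ r) : (alternating r b l).Essential := by
  induction r generalizing b l with
  | zero => simp_all [alternating, Essential, vars]
  | succ r ih =>
    cases l with
    | nil => simp [alternating, Essential, vars]
    | cons v l =>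
      obtain ⟨htake, hdrop⟩ := length_take_drop_lt hl
      have hl_nd := (List.nodup_cons.mp hnd).2
      exact Essential.node (ih (hl_nd.sublist (List.take_sublist _ _)) htake)
        (ih (hl_nd.sublist (List.drop_sublist _ _)) hdrop)
        (notMem_of_nodup_cons hnd (List.take_sublist _ _) (vars_alternating htake))
        (notMem_of_nodup_cons hnd (List.drop_sublist _ _) (vars_alternating hdrop))
        ⟨fun _ => false, by simp [eval_alternating_const_false]⟩

def spineTree : ℕ → List (Fin n) → DTree n
  | 0, _ => leaf true
  | _ + 1, [] => leaf true
  | r + 1, v :: l =>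
    node v (alternating r false (l.take (blockSize r l.length)))
      (spineTree r (l.drop (blockSize r l.length)))

theorem depth_spineTree {r : ℕ} {l : List (Fin n)} (h : r ≤ l.length) :
    (spineTree r l).depth = r := by
  induction r generalizing l with
  | zero => rfl
  | succ r ih =>
    cases l with
    | nil => simp at h
    | cons v l =>
      have := depth_alternating_le r false (l.take (blockSize r l.length))
      simp only [spineTree, depth, ih (le_length_drop_blockSize (Nat.le_of_succ_le_succ h))]
      omega

theorem eval_spineTree_const_true (r : ℕ) (l : List (Fin n)) :
    (spineTree r l).eval (fun _ => true) = true := by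
  induction r generalizing l with
  | zero => rfl
  | succ r ih =>
    cases l with
    | nil => rfl
    | cons v l => simp [spineTree, eval, ih]

theorem vars_spineTree {r : ℕ} {l : List (Fin n)} (hl : l.length < 2 ^ r) :
    (spineTree r l).vars = l.toFinset := by
  induction r generalizing l with
  | zero => simp_all [spineTree, vars]
  | succ r ih =>
    cases l with
    | nil => rfl
    | cons v l =>
      simp only [spineTree, vars, List.toFinset_cons]
      rw [vars_alternating (length_take_blockSize_lt r l), ih (length_drop_blockSize_lt hl),
        ← List.toFinset_append, List.take_append_drop]

theorem essential_spineTree {r : ℕ} {l : List (Fin n)} (hnd : l.Nodup)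
    (hl : l.length < 2 ^ r) : (spineTree r l).Essential := by
  induction r generalizing l with
  | zero => simp_all [spineTree, Essential, vars]
  | succ r ih =>
    cases l with
    | nil => simp [spineTree, Essential, vars]
    | cons v l =>
      have hl_nd := (List.nodup_cons.mp hnd).2
      have hblock := vars_alternating (b := false) (length_take_blockSize_lt r l)
      have hrest := vars_spineTree (length_drop_blockSize_lt hl)
      have hdisj : Disjoint (alternating r false (l.take (blockSize r l.length))).vars
          (spineTree r (l.drop (blockSize r l.length))).vars := by
        rw [hblock, hrest, List.disjoint_toFinset_iff_disjoint]
        exact List.disjoint_take_drop hl_nd le_rfl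
      exact Essential.node
        (essential_alternating (hl_nd.sublist (List.take_sublist _ _)) (length_take_blockSize_lt r l))
        (ih (hl_nd.sublist (List.drop_sublist _ _)) (length_drop_blockSize_lt hl))
        (notMem_of_nodup_cons hnd (List.take_sublist _ _) hblock)
        (notMem_of_nodup_cons hnd (List.drop_sublist _ _) hrest)
        (exists_eval_ne_of_disjoint hdisj (x0 := fun _ => false) (x1 := fun _ => true)
          (by simp [eval_alternating_const_false, eval_spineTree_const_true]))

theorem eval_spineTree {r : ℕ} {l : List (Fin n)} (hnd : l.Nodup) (hl : l.length < 2 ^ r)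
    {x : Fin n → Bool} (hx : ∀ v ∈ l, v ∉ spine r l → x v = false) :
    (spineTree r l).eval x = decide (∀ v ∈ spine r l, x v = true) := by
  induction r generalizing l with
  | zero => simp [spineTree, spine, eval]
  | succ r ih =>
    cases l with
    | nil => simp [spineTree, spine, eval]
    | cons v l =>
      obtain ⟨hv_l, hl_nd⟩ := List.nodup_cons.mp hnd
      have htake := length_take_blockSize_lt r l
      have hdrop := length_drop_blockSize_lt hl
      simp only [spineTree, spine, eval] at hx ⊢
      obtain ⟨s, hs⟩ : ∃ s, blockSize r l.length = s := ⟨_, rfl⟩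
      simp only [hs] at hx htake hdrop ⊢
      have hx' {u : Fin n} (hu : u ∈ l) (hus : u ∉ spine r (l.drop s)) : x u = false :=
        hx u (List.mem_cons_of_mem _ hu) (by simp [ne_of_mem_of_not_mem hu hv_l, hus])
      cases hv : x v with
      | false =>
        have hblock : (alternating r false (l.take s)).eval x = false := by
          refine (eval_congr fun u hu => ?_).trans (eval_alternating_const_false r false _)
          rw [vars_alternating htake, List.mem_toFinset] at hu
          exact hx' (List.mem_of_mem_take hu) fun hus =>
            List.disjoint_take_drop hl_nd le_rfl hu ((spine_sublist _ _).subset hus)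
        simp [hv, hblock]
      | true =>
        have hrest := ih (hl_nd.sublist (List.drop_sublist _ _)) hdrop
          fun u hu hus => hx' (List.mem_of_mem_drop hu) hus
        simp [hv, hrest]

end DTree

theorem stmt4_general (k n : ℕ)
    (h1 : 2 ^ (k - 1) - 1 < n) (h2 : n < 2 ^ k - 1) :
    ∃ f : (Fin n → Bool) → Bool,
      (∀ i, Influences f i) ∧
      (∃ T : DTree n, T.depth = k ∧ T.Computes f) ∧
      ∃ idx : Fin k → Fin n, Function.Injective idx ∧
        ∃ (d : Fin k → Bool) (c : Fin n → Bool),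
          ∀ x : Fin n → Bool,
            (∀ v, (∀ t, idx t ≠ v) → x v = c v) →
            f x = decide (∀ t, xor (x (idx t)) (d t) = true) := by
  have hkn : k ≤ n := by
    have := Nat.lt_two_pow_self (n := k - 1)
    omega
  set L := List.finRange n
  have hkL : k ≤ L.length := by rwa [List.length_finRange]
  have hL : L.length < 2 ^ k := by rw [List.length_finRange]; omega
  have hnd : L.Nodup := List.nodup_finRange n
  have hspine : (spine k L).length = k := length_spine hkL
  refine ⟨(DTree.spineTree k L).eval, fun i => DTree.essential_spineTree hnd hL i ?_,
    ⟨DTree.spineTree k L, DTree.depth_spineTree hkL, fun _ => rfl⟩,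
    fun t => (spine k L)[t.cast hspine.symm], ?_, fun _ => false, fun _ => false, fun x hx => ?_⟩
  · simp [DTree.vars_spineTree hL, L]
  · exact (List.nodup_iff_injective_getElem.mp ((spine_sublist k L).nodup hnd)).comp
      (Fin.cast_injective _)
  · rw [DTree.eval_spineTree hnd hL fun v _ hv => hx v fun t h => hv (h ▸ List.getElem_mem _)]
    simp [List.forall_mem_iff_getElem, hspine, Fin.forall_iff]

/-- for `2^(k-1) - 1 < n < 2^k - 1` there is a Boolean function on
`n` variables, all influencing, computed by a depth-`k` decision tree, which
restricts to `z ↦ ⋀ t, (z_{i_t} XOR d_t)` on `k` distinct variables. -/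
theorem stmt4 (k n : ℕ) (hk : 2 ≤ k)
    (h1 : 2 ^ (k - 1) - 1 < n) (h2 : n < 2 ^ k - 1) :
    ∃ f : (Fin n → Bool) → Bool,
      (∀ i, Influences f i) ∧
      (∃ T : DTree n, T.depth = k ∧ T.Computes f) ∧
      ∃ idx : Fin k → Fin n, Function.Injective idx ∧
        ∃ (d : Fin k → Bool) (c : Fin n → Bool),
          ∀ x : Fin n → Bool,
            (∀ v, (∀ t, idx t ≠ v) → x v = c v) →
            f x = decide (∀ t, xor (x (idx t)) (d t) = true) :=
  stmt4_general k n h1 h2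
end

section
/- Let m ≥ 1, n = 2m, and let f be a Maiorana–McFarland bent function on n variables, i.e. f(x, y) = (XOR over those i with φ(x) i = true of y i) XOR h(x) with φ bijective. Then every multilinear real polynomial representing f has total degree exactly n: there exists a polynomial p in MvPolynomial (Fin n) ℝ that has degree at most 1 in each variable and satisfies p(x) = f(x) for every Boolean input x (identifying false ↦ 0, true ↦ 1), and every such polynomial has total degree n. -/
/-! For a multilinear polynomial `p` in `n` variables, the alternating sum
`∑ₓ (-1)^(n - |x|) p(x)` over the Boolean cube is the coefficient of `X₁ ⋯ Xₙ` (each coordinate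
sum `∑ₜ ±tᵏ` vanishes for `k = 0`), so a representation of `f` has degree `n` as soon as
`∑ₓ (-1)^(n - |x|) f(x) ≠ 0`. Writing `f = (1 - (-1)^f) / 2`, the constant part cancels because
`n ≥ 1`, and what remains is, up to sign, half the Walsh coefficient of `(-1)^f` at the all-ones
vector. For `f(x, y) = φ(x)·y ⊕ h(x)` the sum over `y` vanishes unless `φ(x)` is all-ones, and the
unique such `x` contributes `±2^m`. -/

/-- XOR over those coordinates `i` with `a i = true` of `y i`, expressed as the
parity of the number of coordinates where both `a` and `y` are true. -/
def parityDot {m : ℕ} (a y : Fin m → Bool) : Bool :=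
  decide (Odd ((Finset.univ.filter (fun i : Fin m => a i = true ∧ y i = true)).card))

/-- The Maiorana–McFarland function `f(x, y) = φ(x)·y XOR h(x)` on `m + m`
variables, where the first `m` coordinates form `x` and the last `m` form `y`. -/
def MMBent {m : ℕ} (φ : (Fin m → Bool) → (Fin m → Bool))
    (h : (Fin m → Bool) → Bool) (z : Fin (m + m) → Bool) : Bool :=
  xor (parityDot (φ (fun i => z (Fin.castAdd m i))) (fun i => z (Fin.natAdd m i)))
      (h (fun i => z (Fin.castAdd m i)))

open MvPolynomial Finset

section Multilinear

variable {σ R : Type*} [Fintype σ] [CommRing R]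

def boolPoint (R : Type*) [Zero R] [One R] (x : σ → Bool) : σ → R := fun i => if x i then 1 else 0

noncomputable def boolIndicator (y : σ → Bool) : MvPolynomial σ R :=
  ∏ i, if y i then X i else 1 - X i

lemma eval_boolIndicator (y x : σ → Bool) :
    eval (boolPoint R x) (boolIndicator y) = if y = x then 1 else 0 := by
  have hfactor : ∀ i, eval (boolPoint R x) (if y i then X i else 1 - X i) =
      if y i = x i then 1 else 0 := by
    intro i
    cases hy : y i <;> cases hx : x i <;> simp [boolPoint, hx]
  simp only [boolIndicator, map_prod, hfactor, Fintype.prod_boole, ← _root_.funext_iff]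

lemma degreeOf_boolIndicator_le (y : σ → Bool) (i : σ) :
    (boolIndicator y : MvPolynomial σ R).degreeOf i ≤ 1 := by
  classical
  rcases subsingleton_or_nontrivial R with hR | hR
  · simp [Subsingleton.elim (boolIndicator y) (0 : MvPolynomial σ R)]
  have hfactor : ∀ j, degreeOf i (if y j then X j else 1 - X j : MvPolynomial σ R) ≤
      if i = j then 1 else 0 := by
    intro j
    have hX := degreeOf_X (R := R) i j
    split
    · exact hX.le
    · exact (degreeOf_sub_le _ _ _).trans (by simp [hX])
  calc degreeOf i (boolIndicator y : MvPolynomial σ R)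
      ≤ ∑ j, degreeOf i (if y j then X j else 1 - X j : MvPolynomial σ R) :=
        degreeOf_prod_le _ _ _
    _ ≤ ∑ j, if i = j then 1 else 0 := sum_le_sum fun j _ => hfactor j
    _ = 1 := by simp

theorem exists_multilinear_eval_boolPoint_eq [DecidableEq σ] (g : (σ → Bool) → R) :
    ∃ p : MvPolynomial σ R, (∀ i, p.degreeOf i ≤ 1) ∧ ∀ x, eval (boolPoint R x) p = g x := by
  refine ⟨∑ y, C (g y) * boolIndicator y, fun i => ?_, fun x => ?_⟩
  · exact (degreeOf_sum_le _ _ _).trans <| Finset.sup_le fun y _ =>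
      (degreeOf_C_mul_le _ _ _).trans (degreeOf_boolIndicator_le y i)
  · simp [eval_boolIndicator]

def bitSign (t : Bool) : R := if t then 1 else -1

def boolSign (x : σ → Bool) : R := ∏ i, bitSign (x i)

noncomputable def allOnes (σ : Type*) [Fintype σ] : σ →₀ ℕ := Finsupp.equivFunOnFinite.symm 1

@[simp] lemma allOnes_apply (i : σ) : allOnes σ i = 1 := rfl

lemma sum_bitSign_mul_pow {k : ℕ} (hk : k ≤ 1) :
    ∑ t : Bool, bitSign t * (if t then 1 else 0 : R) ^ k = if k = 1 then 1 else 0 := by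
  interval_cases k <;> simp [bitSign]

theorem sum_boolSign_mul_eval [DecidableEq σ] {p : MvPolynomial σ R}
    (hp : ∀ i, p.degreeOf i ≤ 1) :
    ∑ x, boolSign x * eval (boolPoint R x) p = p.coeff (allOnes σ) := by
  have hmonomial : ∀ d ∈ p.support,
      ∑ x : σ → Bool, boolSign x * ∏ i, boolPoint R x i ^ d i = if d = allOnes σ then 1 else 0 := by
    intro d hd
    have hd1 : ∀ i, d i ≤ 1 := fun i => (monomial_le_degreeOf i hd).trans (hp i)
    simp only [boolSign, boolPoint, ← prod_mul_distrib]
    rw [← Fintype.prod_sum fun i (t : Bool) => bitSign t * (if t then (1 : R) else 0) ^ d i]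
    simp only [sum_bitSign_mul_pow (hd1 _), Fintype.prod_boole]
    congr 1
    exact propext ⟨fun h => Finsupp.ext fun i => by simp [h i], fun h i => by simp [h]⟩
  calc ∑ x, boolSign x * eval (boolPoint R x) p
      = ∑ d ∈ p.support, p.coeff d * ∑ x : σ → Bool, boolSign x * ∏ i, boolPoint R x i ^ d i := by
        simp only [eval_eq', mul_sum]
        rw [sum_comm]
        refine sum_congr rfl fun d _ => sum_congr rfl fun x _ => by ring
    _ = p.coeff (allOnes σ) := by
        rw [sum_congr rfl fun d hd => by rw [hmonomial d hd]]
        simp only [mul_ite, mul_one, mul_zero, sum_ite_eq']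
        exact ite_eq_left_iff.mpr fun h => (notMem_support_iff.mp h).symm

theorem totalDegree_eq_card_of_coeff_allOnes_ne_zero {p : MvPolynomial σ R}
    (hp : ∀ i, p.degreeOf i ≤ 1) (hc : p.coeff (allOnes σ) ≠ 0) :
    p.totalDegree = Fintype.card σ := by
  refine le_antisymm (Finset.sup_le fun d hd => ?_) ?_
  · rw [Finsupp.sum_fintype _ _ fun _ => rfl, Fintype.card_eq_sum_ones]
    exact sum_le_sum fun i _ => (monomial_le_degreeOf i hd).trans (hp i)
  · calc Fintype.card σ = (allOnes σ).sum fun _ e => e := by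
          rw [Finsupp.sum_fintype _ _ fun _ => rfl]; simp
      _ ≤ p.totalDegree := le_totalDegree (mem_support_iff.mpr hc)

end Multilinear

section WalshSum

variable {R : Type*} [CommRing R]

def negOnePow (b : Bool) : R := if b then -1 else 1

lemma negOnePow_xor (u v : Bool) : (negOnePow (xor u v) : R) = negOnePow u * negOnePow v := by
  cases u <;> cases v <;> simp [negOnePow]

lemma negOnePow_parityDot {m : ℕ} (c b : Fin m → Bool) :
    (negOnePow (parityDot c b) : R) = ∏ i, negOnePow (c i && b i) := by
  have hprod : (∏ i, negOnePow (c i && b i) : R) =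
      (-1) ^ (univ.filter fun i => c i = true ∧ b i = true).card := by
    simp [negOnePow, prod_ite, Bool.and_eq_true]
  rw [hprod, parityDot]
  rcases Nat.even_or_odd (univ.filter fun i => c i = true ∧ b i = true).card with he | ho
  · simp [negOnePow, he.neg_one_pow, Nat.not_odd_iff_even.mpr he]
  · simp [negOnePow, ho.neg_one_pow, ho]

lemma sum_boolSign_mul_negOnePow_parityDot {m : ℕ} (c : Fin m → Bool) :
    ∑ b, boolSign b * (negOnePow (parityDot c b) : R) = ∏ i, if c i then -2 else 0 := by
  simp only [negOnePow_parityDot, boolSign, ← prod_mul_distrib]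
  rw [← Fintype.prod_sum fun i (t : Bool) => bitSign t * (negOnePow (c i && t) : R)]
  refine prod_congr rfl fun i _ => ?_
  cases c i <;> norm_num [bitSign, negOnePow]

lemma sum_boolSign_eq_zero {σ : Type*} [Fintype σ] [DecidableEq σ] [Nonempty σ] :
    ∑ x : σ → Bool, (boolSign x : R) = 0 := by
  simp only [boolSign]
  rw [← Fintype.prod_sum fun _ (t : Bool) => (bitSign t : R)]
  exact prod_eq_zero (mem_univ (Classical.arbitrary σ)) (by simp [bitSign])

lemma boolSign_append {m n : ℕ} (a : Fin m → Bool) (b : Fin n → Bool) :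
    (boolSign (Fin.append a b) : R) = boolSign a * boolSign b := by
  simp [boolSign, Fin.prod_univ_add]

lemma MMBent_append {m : ℕ} (φ : (Fin m → Bool) → (Fin m → Bool)) (h : (Fin m → Bool) → Bool)
    (a b : Fin m → Bool) : MMBent φ h (Fin.append a b) = xor (parityDot (φ a) b) (h a) := by
  simp only [MMBent, Fin.append_left, Fin.append_right]

theorem sum_boolSign_mul_negOnePow_MMBent {m : ℕ} {φ : (Fin m → Bool) → (Fin m → Bool)}
    (hφ : Function.Injective φ) (h : (Fin m → Bool) → Bool) {a : Fin m → Bool}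
    (ha : φ a = fun _ => true) :
    ∑ z, boolSign z * (negOnePow (MMBent φ h z) : R) = boolSign a * negOnePow (h a) * (-2) ^ m := by
  have happend : ⇑(Fin.appendEquiv m m) = fun ab : (Fin m → Bool) × (Fin m → Bool) =>
      Fin.append ab.1 ab.2 := rfl
  rw [← (Fin.appendEquiv m m).sum_comp, Fintype.sum_prod_type]
  simp only [happend, boolSign_append, MMBent_append, negOnePow_xor]
  have hinner : ∀ a', ∑ b, boolSign a' * boolSign b *
      (negOnePow (parityDot (φ a') b) * negOnePow (h a') : R) =
      boolSign a' * negOnePow (h a') * ∏ i, if φ a' i then -2 else 0 := by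
    intro a'
    rw [← sum_boolSign_mul_negOnePow_parityDot, mul_sum]
    exact sum_congr rfl fun b _ => by ring
  rw [sum_congr rfl fun a' _ => hinner a', sum_eq_single a]
  · simp [ha]
  · intro a' _ ha'
    obtain ⟨i, hi⟩ : ∃ i, φ a' i = false := by
      by_contra! hall
      exact ha' (hφ (ha ▸ funext fun i => by simpa using hall i))
    simp [prod_eq_zero (mem_univ i), hi]
  · simp

lemma boolSign_ne_zero [Nontrivial R] {σ : Type*} [Fintype σ] (x : σ → Bool) :
    (boolSign x : R) ≠ 0 := by
  have hsq : (boolSign x : R) * boolSign x = 1 := by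
    simp only [boolSign, ← prod_mul_distrib]
    exact prod_eq_one fun i _ => by cases x i <;> simp [bitSign]
  exact left_ne_zero_of_mul_eq_one hsq

lemma negOnePow_ne_zero [Nontrivial R] (b : Bool) : (negOnePow b : R) ≠ 0 := by
  cases b <;> simp [negOnePow]

theorem sum_boolSign_mul_MMBent_ne_zero [IsDomain R] [CharZero R] {m : ℕ} (hm : 1 ≤ m)
    {φ : (Fin m → Bool) → (Fin m → Bool)} (hφ : Function.Bijective φ)
    (h : (Fin m → Bool) → Bool) :
    ∑ z, boolSign z * (if MMBent φ h z then 1 else 0 : R) ≠ 0 := by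
  obtain ⟨a, ha⟩ := hφ.2 fun _ => true
  have : Nonempty (Fin (m + m)) := ⟨⟨0, by omega⟩⟩
  -- `2 [b] = 1 - (-1)^b` turns the sum into two Walsh sums.
  have htwice : 2 * ∑ z, boolSign z * (if MMBent φ h z then 1 else 0 : R) =
      ∑ z : Fin (m + m) → Bool, boolSign z - ∑ z, boolSign z * (negOnePow (MMBent φ h z) : R) := by
    rw [mul_sum, ← sum_sub_distrib]
    exact sum_congr rfl fun z _ => by cases MMBent φ h z <;> simp [negOnePow, two_mul]
  rw [sum_boolSign_eq_zero, sum_boolSign_mul_negOnePow_MMBent hφ.1 h ha, zero_sub] at htwice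
  refine fun hzero => neg_ne_zero.mpr ?_ (htwice.symm.trans (by rw [hzero, mul_zero]))
  exact mul_ne_zero (mul_ne_zero (boolSign_ne_zero a) (negOnePow_ne_zero _))
    (pow_ne_zero _ (by norm_num))

end WalshSum

/-- for `m ≥ 1` and a Maiorana–McFarland bent function `f` on
`n = m + m` variables, there is a multilinear real polynomial representing `f`
on Boolean inputs, and every such polynomial has total degree exactly `n`. -/
theorem stmt16 (m : ℕ) (hm : 1 ≤ m)
    (φ : (Fin m → Bool) → (Fin m → Bool)) (hφ : Function.Bijective φ)
    (h : (Fin m → Bool) → Bool) :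
    (∃ p : MvPolynomial (Fin (m + m)) ℝ,
      (∀ i, p.degreeOf i ≤ 1) ∧
      (∀ x : Fin (m + m) → Bool,
        MvPolynomial.eval (fun i => if x i then (1 : ℝ) else 0) p
          = if MMBent φ h x then 1 else 0)) ∧
    (∀ p : MvPolynomial (Fin (m + m)) ℝ,
      (∀ i, p.degreeOf i ≤ 1) →
      (∀ x : Fin (m + m) → Bool,
        MvPolynomial.eval (fun i => if x i then (1 : ℝ) else 0) p
          = if MMBent φ h x then 1 else 0) →
      p.totalDegree = m + m) := by
  refine ⟨exists_multilinear_eval_boolPoint_eq _, fun p hp heval => ?_⟩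
  have hcoeff : p.coeff (allOnes _) ≠ 0 := by
    have hvalues : ∀ x, eval (boolPoint ℝ x) p = if MMBent φ h x then 1 else 0 := heval
    rw [← sum_boolSign_mul_eval hp]
    simpa only [hvalues] using sum_boolSign_mul_MMBent_ne_zero hm hφ h
  simpa using totalDegree_eq_card_of_coeff_allOnes_ne_zero hp hcoeff
end
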